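/- Let A, B ∈ ℝ^{n×n} with det A > 0 and det B > 0, and let S(M) = √(MᵀM). Then dist(A·B⁻¹, SO(n)) ≤ c(n) · |(S(A) − S(B))·B⁻¹|_F for a dimensional constant c(n), where dist denotes Frobenius-norm distance to SO(n). -/

import Mathlib

open Matrix MeasureTheory

noncomputable def msqrt {n : ℕ} (A : Matrix (Fin n) (Fin n) ℝ) : Matrix (Fin n) (Fin n) ℝ :=
  (Matrix.posSemidef_conjTranspose_mul_self A).1.eigenvectorUnitary.1 *
    diagonal ((↑) ∘ (Real.sqrt ∘ (Matrix.posSemidef_conjTranspose_mul_self A).1.eigenvalues)) *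
    (star (Matrix.posSemidef_conjTranspose_mul_self A).1.eigenvectorUnitary : Matrix (Fin n) (Fin n) ℝ)

noncomputable def frobNorm {n : ℕ} (A : Matrix (Fin n) (Fin n) ℝ) : ℝ :=
  Real.sqrt (∑ i, ∑ j, (A i j) ^ 2)

noncomputable def opNorm {n : ℕ} (A : Matrix (Fin n) (Fin n) ℝ) : ℝ :=
  ‖Matrix.toEuclideanCLM (𝕜 := ℝ) A‖

noncomputable def sLam {n : ℕ} (A : Matrix (Fin n) (Fin n) ℝ) : ℝ :=
  sInf {y | ∃ v : EuclideanSpace ℝ (Fin n), ‖v‖ = 1 ∧ y = ‖Matrix.toEuclideanCLM (𝕜 := ℝ) A v‖}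

/-!
Polar decomposition: for `det X > 0` write `X = Q_X S(X)` with `Q_X := X S(X)⁻¹ ∈ SO(n)`.
Since `Q_Bᵀ = S(B) B⁻¹`, the rotation `R := Q_A Q_Bᵀ` satisfies
`A B⁻¹ - R = Q_A (S(A) - S(B)) B⁻¹`, and left multiplication by `Q_A` preserves the Frobenius
norm. Hence the estimate holds with `c(n) = 1`.
-/

lemma sum_sq_entries_eq_trace {m k R : Type*} [Fintype m] [Fintype k] [CommSemiring R]
    (M : Matrix m k R) :
    ∑ i, ∑ j, (M i j) ^ 2 = (Mᵀ * M).trace := by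
  simp only [Matrix.trace, diag_apply, mul_apply, transpose_apply, sq]
  exact Finset.sum_comm

lemma frobNorm_nonneg {n : ℕ} (M : Matrix (Fin n) (Fin n) ℝ) : 0 ≤ frobNorm M :=
  Real.sqrt_nonneg _

lemma frobNorm_orthogonal_mul {n : ℕ} {Q : Matrix (Fin n) (Fin n) ℝ} (hQ : Qᵀ * Q = 1)
    (M : Matrix (Fin n) (Fin n) ℝ) : frobNorm (Q * M) = frobNorm M := by
  have h : (Q * M)ᵀ * (Q * M) = Mᵀ * M := by
    rw [transpose_mul, Matrix.mul_assoc, ← Matrix.mul_assoc Qᵀ, hQ, Matrix.one_mul]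
  rw [frobNorm, frobNorm, sum_sq_entries_eq_trace, sum_sq_entries_eq_trace, h]

section msqrt

variable {n : ℕ} (X : Matrix (Fin n) (Fin n) ℝ)

lemma msqrt_posSemidef : (msqrt X).PosSemidef := by
  rw [msqrt, star_eq_conjTranspose]
  apply PosSemidef.mul_mul_conjTranspose_same
  rw [posSemidef_diagonal_iff]
  intro i
  simp [Real.sqrt_nonneg]

lemma transpose_msqrt : (msqrt X)ᵀ = msqrt X :=
  (msqrt_posSemidef X).1

lemma msqrt_mul_self : msqrt X * msqrt X = Xᵀ * X := by
  have hP := posSemidef_conjTranspose_mul_self X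
  have hU := Unitary.coe_star_mul_self hP.1.eigenvectorUnitary
  rw [← conjTranspose_eq_transpose_of_trivial X, hP.1.spectral_theorem,
    Unitary.conjStarAlgAut_apply, msqrt]
  simp only [Matrix.mul_assoc]
  rw [← Matrix.mul_assoc _ _ (diagonal _ * _), hU, Matrix.one_mul, ← Matrix.mul_assoc
    (diagonal _), diagonal_mul_diagonal]
  congr 3
  funext i
  exact Real.mul_self_sqrt (hP.eigenvalues_nonneg i)

lemma det_msqrt : (msqrt X).det = |X.det| := by
  have hsq : (msqrt X).det ^ 2 = X.det ^ 2 := by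
    rw [sq, sq, ← det_mul, msqrt_mul_self, det_mul, det_transpose]
  rw [← abs_of_nonneg (msqrt_posSemidef X).det_nonneg]
  exact sq_eq_sq_iff_abs_eq_abs _ _ |>.mp hsq

end msqrt

section polar

variable {n : ℕ} {X : Matrix (Fin n) (Fin n) ℝ}

noncomputable def polarFactor (X : Matrix (Fin n) (Fin n) ℝ) : Matrix (Fin n) (Fin n) ℝ :=
  X * (msqrt X)⁻¹

lemma isUnit_det_msqrt (hX : X.det ≠ 0) : IsUnit (msqrt X).det := by
  rw [det_msqrt]
  exact (abs_pos.mpr hX).ne'.isUnit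

lemma polarFactor_mul_msqrt (hX : X.det ≠ 0) : polarFactor X * msqrt X = X := by
  rw [polarFactor, Matrix.mul_assoc, nonsing_inv_mul _ (isUnit_det_msqrt hX), Matrix.mul_one]

lemma transpose_polarFactor (hX : X.det ≠ 0) : (polarFactor X)ᵀ = msqrt X * X⁻¹ := by
  rw [polarFactor, transpose_mul, transpose_nonsing_inv, transpose_msqrt]
  calc (msqrt X)⁻¹ * Xᵀ = (msqrt X)⁻¹ * (Xᵀ * X) * X⁻¹ := by
        rw [Matrix.mul_assoc, Matrix.mul_assoc, mul_nonsing_inv _ hX.isUnit, Matrix.mul_one]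
    _ = (msqrt X)⁻¹ * (msqrt X * msqrt X) * X⁻¹ := by rw [msqrt_mul_self]
    _ = msqrt X * X⁻¹ := by
        rw [← Matrix.mul_assoc, nonsing_inv_mul _ (isUnit_det_msqrt hX), Matrix.one_mul]

lemma polarFactor_transpose_mul_self (hX : X.det ≠ 0) :
    (polarFactor X)ᵀ * polarFactor X = 1 := by
  rw [transpose_polarFactor hX, polarFactor, Matrix.mul_assoc, ← Matrix.mul_assoc X⁻¹,
    nonsing_inv_mul _ hX.isUnit, Matrix.one_mul, mul_nonsing_inv _ (isUnit_det_msqrt hX)]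

lemma det_polarFactor (hX : 0 < X.det) : (polarFactor X).det = 1 := by
  rw [polarFactor, det_mul, det_nonsing_inv, det_msqrt, abs_of_pos hX, Ring.inverse_eq_inv,
    mul_inv_cancel₀ hX.ne']

end polar

/-- Quantitative distance of A·B⁻¹ to SO(n) in terms of (S(A) − S(B))·B⁻¹. -/
theorem stmt_7 (n : ℕ) :
    ∃ c : ℝ, 0 < c ∧
      ∀ A B : Matrix (Fin n) (Fin n) ℝ, 0 < A.det → 0 < B.det →
        sInf {d : ℝ | ∃ R : Matrix (Fin n) (Fin n) ℝ,
            (Rᵀ * R = 1 ∧ R.det = 1) ∧ d = frobNorm (A * B⁻¹ - R)}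
          ≤ c * frobNorm ((msqrt A - msqrt B) * B⁻¹) := by
  refine ⟨1, one_pos, fun A B hA hB => ?_⟩
  set QA := polarFactor A
  set QB := polarFactor B
  have hQA : QAᵀ * QA = 1 := polarFactor_transpose_mul_self hA.ne'
  have hQB : QB * QBᵀ = 1 := mul_eq_one_comm.mp (polarFactor_transpose_mul_self hB.ne')
  have hR : (QA * QBᵀ)ᵀ * (QA * QBᵀ) = 1 := by
    rw [transpose_mul, transpose_transpose, Matrix.mul_assoc, ← Matrix.mul_assoc QAᵀ, hQA,
      Matrix.one_mul, hQB]
  have hdetR : (QA * QBᵀ).det = 1 := by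
    rw [det_mul, det_transpose, det_polarFactor hA, det_polarFactor hB, one_mul]
  have hdiff : A * B⁻¹ - QA * QBᵀ = QA * ((msqrt A - msqrt B) * B⁻¹) := by
    rw [transpose_polarFactor hB.ne', sub_mul, Matrix.mul_sub, ← Matrix.mul_assoc,
      ← Matrix.mul_assoc, polarFactor_mul_msqrt hA.ne', Matrix.mul_assoc]
  rw [one_mul, ← frobNorm_orthogonal_mul hQA, ← hdiff]
  exact csInf_le ⟨0, fun _ ⟨R, _, hd⟩ => hd ▸ frobNorm_nonneg _⟩
    ⟨QA * QBᵀ, ⟨hR, hdetR⟩, rfl⟩
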